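/- Let x, y be true twins in a reflexive pattern H, let D be an H-arc-coloured digraph with colouring c, and let c_{xy} be the H_{xy}-arc-colouring of D obtained by recolouring every arc coloured x or y with the contracted vertex v_{xy}, leaving all other colours unchanged. Then for any two vertices u, v of D, a directed path P of D is an H-path (under c) if and only if it is an H_{xy}-path (under c_{xy}); consequently, every H_{xy}-kernel of (D, c_{xy}) is an H-kernel of (D, c). -/

import Mathlib

/-- The list of colours along a list of vertices, given an arc-colouring `c`. -/
def colourList {α β : Type*} (c : β → β → α) : List β → List α
  | a :: b :: t => c a b :: colourList c (b :: t)
  | _ => []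

/-- An `H`-walk in the `H`-arc-coloured digraph `(D, c)`: a directed walk with at least one
arc whose sequence of arc-colours is a directed walk in the pattern `H`. -/
def IsHWalk {α β : Type*} (H : α → α → Prop) (D : β → β → Prop) (c : β → β → α)
    (l : List β) : Prop :=
  2 ≤ l.length ∧ l.Chain' D ∧ (colourList c l).Chain' H

/-- An `H`-path: an `H`-walk whose vertices are pairwise distinct. -/
def IsHPath {α β : Type*} (H : α → α → Prop) (D : β → β → Prop) (c : β → β → α)
    (l : List β) : Prop :=
  IsHWalk H D c l ∧ l.Nodup

/-- `u` reaches `v` by `H`-paths. -/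
def HPathReach {α β : Type*} (H : α → α → Prop) (D : β → β → Prop) (c : β → β → α)
    (u v : β) : Prop :=
  ∃ l, IsHPath H D c l ∧ l.head? = some u ∧ l.getLast? = some v

/-- `u` reaches `v` by `H`-walks. -/
def HWalkReach {α β : Type*} (H : α → α → Prop) (D : β → β → Prop) (c : β → β → α)
    (u v : β) : Prop :=
  ∃ l, IsHWalk H D c l ∧ l.head? = some u ∧ l.getLast? = some v

/-- A digraph (binary relation) is loopless. -/
def Loopless {β : Type*} (D : β → β → Prop) : Prop := ∀ v, ¬ D v v

/-- `S` is an independent set of the digraph `D` (no arc of `D` joins two of its vertices). -/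
def Indep {β : Type*} (D : β → β → Prop) (S : Set β) : Prop :=
  ∀ u ∈ S, ∀ v ∈ S, ¬ D u v

/-- `S` is independent by `H`-paths. -/
def HIndep {α β : Type*} (H : α → α → Prop) (D : β → β → Prop) (c : β → β → α)
    (S : Set β) : Prop :=
  ∀ u ∈ S, ∀ v ∈ S, u ≠ v → ¬ HPathReach H D c u v

/-- `S` is absorbent by `H`-paths. -/
def HAbsorbent {α β : Type*} (H : α → α → Prop) (D : β → β → Prop) (c : β → β → α)
    (S : Set β) : Prop :=
  ∀ u ∉ S, ∃ v ∈ S, HPathReach H D c u v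

/-- An `H`-kernel: independent and absorbent by `H`-paths. -/
def HKernel {α β : Type*} (H : α → α → Prop) (D : β → β → Prop) (c : β → β → α)
    (S : Set β) : Prop :=
  HIndep H D c S ∧ HAbsorbent H D c S

/-- `S` is independent by `H`-walks. -/
def WIndep {α β : Type*} (H : α → α → Prop) (D : β → β → Prop) (c : β → β → α)
    (S : Set β) : Prop :=
  ∀ u ∈ S, ∀ v ∈ S, u ≠ v → ¬ HWalkReach H D c u v

/-- `S` is absorbent by `H`-walks. -/
def WAbsorbent {α β : Type*} (H : α → α → Prop) (D : β → β → Prop) (c : β → β → α)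
    (S : Set β) : Prop :=
  ∀ u ∉ S, ∃ v ∈ S, HWalkReach H D c u v

/-- A kernel by `H`-walks. -/
def WKernel {α β : Type*} (H : α → α → Prop) (D : β → β → Prop) (c : β → β → α)
    (S : Set β) : Prop :=
  WIndep H D c S ∧ WAbsorbent H D c S

/-- The complement of a pattern: `(u,v)` (with `u ≠ v`) is an arc iff it is not an arc of `H`. -/
def complRel {α : Type*} (H : α → α → Prop) : α → α → Prop :=
  fun u v => u ≠ v ∧ ¬ H u v

/-- `G` contains a directed cycle of odd length. -/
def HasOddDicycle {α : Type*} (G : α → α → Prop) : Prop :=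
  ∃ (x : α) (l : List α), (x :: l).Nodup ∧ Odd (x :: l).length ∧ (x :: l).Chain' G ∧
    G ((x :: l).getLast (List.cons_ne_nil x l)) x

/-- The list of arcs (consecutive pairs) of a list of vertices. -/
def arcsOf {β : Type*} (l : List β) : List (β × β) := l.zip l.tail

/- Recolouring by `y ↦ x` is a map `f` of colours with `H (f a) (f b) ↔ H a b`, because `x` and
`y` have the same in- and out-neighbourhoods; such a map preserves exactly which colour
sequences are walks of `H`. So the `H`-paths of `D` are the same for both colourings, and
`H`-kernels, defined through `H`-paths alone, coincide. -/

lemma colourList_comp {α β : Type*} (f : α → α) (c : β → β → α) :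
    ∀ l, colourList (fun u v => f (c u v)) l = (colourList c l).map f
  | [] => rfl
  | [_] => rfl
  | a :: b :: t => by
    simp [colourList, colourList_comp f c (b :: t)]

lemma isHPath_comp_iff {α β : Type*} {H : α → α → Prop} {f : α → α}
    (hf : ∀ a b, H (f a) (f b) ↔ H a b) (D : β → β → Prop) (c : β → β → α) (l : List β) :
    IsHPath H D (fun u v => f (c u v)) l ↔ IsHPath H D c l := by
  simp only [IsHPath, IsHWalk, colourList_comp, List.Chain', List.isChain_map, hf]

lemma hPathReach_congr {α β : Type*} {H : α → α → Prop} {D : β → β → Prop} {c c' : β → β → α}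
    (h : ∀ l, IsHPath H D c l ↔ IsHPath H D c' l) (u v : β) :
    HPathReach H D c u v ↔ HPathReach H D c' u v := by
  simp only [HPathReach, h]

lemma hKernel_congr {α β : Type*} {H : α → α → Prop} {D : β → β → Prop} {c c' : β → β → α}
    (h : ∀ l, IsHPath H D c l ↔ IsHPath H D c' l) (K : Set β) :
    HKernel H D c K ↔ HKernel H D c' K := by
  simp only [HKernel, HIndep, HAbsorbent, hPathReach_congr h]

lemma adj_merge_twins_iff {α : Type*} [DecidableEq α] {H : α → α → Prop} {x y : α}
    (htwin_out : ∀ z, H x z ↔ H y z) (htwin_in : ∀ z, H z x ↔ H z y) (a b : α) :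
    H (if a = y then x else a) (if b = y then x else b) ↔ H a b := by
  split_ifs with ha hb hb
  · rw [ha, hb, htwin_out, htwin_in]
  · rw [ha, htwin_out]
  · rw [hb, htwin_in]
  · rfl

theorem stmt13_general {α β : Type} [DecidableEq α] (H : α → α → Prop)
    (x y : α)
    (htwin_out : ∀ z, H x z ↔ H y z) (htwin_in : ∀ z, H z x ↔ H z y)
    (D : β → β → Prop) (c : β → β → α) :
    (∀ l, IsHPath H D c l ↔
        IsHPath H D (fun u v => if c u v = y then x else c u v) l) ∧
      ∀ K, HKernel H D (fun u v => if c u v = y then x else c u v) K →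
        HKernel H D c K := by
  have hpath : ∀ l, IsHPath H D c l ↔
      IsHPath H D (fun u v => if c u v = y then x else c u v) l := fun l =>
    (isHPath_comp_iff (adj_merge_twins_iff htwin_out htwin_in) D c l).symm
  exact ⟨hpath, fun K => (hKernel_congr hpath K).mpr⟩

/-- Let `x, y` be true twins in a reflexive pattern `H`, `D` an
`H`-arc-coloured digraph with colouring `c`, and `c'` the `H_{xy}`-colouring obtained by
recolouring every arc coloured `y` with the contracted vertex (represented by `x`). Then
a directed path of `D` is an `H`-path under `c` iff it is an `H_{xy}`-path under `c'`;
consequently every `H_{xy}`-kernel of `(D, c')` is an `H`-kernel of `(D, c)`. -/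
theorem stmt13 {α β : Type} [DecidableEq α] (H : α → α → Prop) (hrefl : Reflexive H)
    (x y : α) (hxy : x ≠ y)
    (htwin_out : ∀ z, H x z ↔ H y z) (htwin_in : ∀ z, H z x ↔ H z y)
    (D : β → β → Prop) (hD : Loopless D) (c : β → β → α) :
    (∀ l, IsHPath H D c l ↔
        IsHPath H D (fun u v => if c u v = y then x else c u v) l) ∧
      ∀ K, HKernel H D (fun u v => if c u v = y then x else c u v) K →
        HKernel H D c K :=
  stmt13_general H x y htwin_out htwin_in D c
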